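/- arXiv:math/0307184 — 2 statements merged into one kernel-verified Lean document; each statement's English description precedes it below -/
import Mathlib

section
/- Let 𝔰 be a ℤ-graded real Lie algebra, 𝔩 an 𝔰-module, and Y ∈ 𝔩. Then the 𝔰-submodule of 𝔩 generated by Y is spanned (as a vector space) by the homogeneous decreasing Lie monomials in Y, i.e. by elements of the form [X₁,[X₂,…,[Xᵣ,Y]…]] where each Xᵢ is a homogeneous element of 𝔰 and deg(X₁) ≥ deg(X₂) ≥ … ≥ deg(Xᵣ). -/
/-!
The span of all homogeneous Lie monomials in `Y` is stable under the action of homogeneous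
elements, hence, as these span the Lie algebra, it is a Lie submodule; it contains `Y`, so it is
the Lie span of `Y`. A monomial with an adjacent ascent `deg X < deg X'` is straightened by the
Jacobi identity `[…, X, X', …] = […, X', X, …] + […, [X, X'], …]`: the first term has one
ascending pair fewer and the second is shorter, so induction on (length, number of ascending
pairs) writes every homogeneous monomial as a sum of decreasing ones.
-/

namespace List

variable {α ι : Type*} [LinearOrder ι]

def ascendingPairCount : List ι → ℕ
  | [] => 0
  | a :: t => t.countP (a < ·) + ascendingPairCount t

theorem ascendingPairCount_append_cons_cons {p q : ι} (a b : List ι) (h : p < q) :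
    ascendingPairCount (a ++ p :: q :: b) = ascendingPairCount (a ++ q :: p :: b) + 1 := by
  induction a with
  | nil =>
    simp only [nil_append, ascendingPairCount, countP_cons, decide_eq_true_eq, h, not_lt.2 h.le,
      if_true, if_false]
    omega
  | cons c a ih =>
    simp only [cons_append, ascendingPairCount, countP_append, countP_cons, decide_eq_true_eq, ih]
    omega

theorem pairwise_map_ge_or_exists_lt (f : α → ι) (l : List α) :
    (l.map f).Pairwise (· ≥ ·) ∨ ∃ a u v b, l = a ++ u :: v :: b ∧ f u < f v := by
  by_cases h : ∀ ⦃u v a b⦄, l = a ++ u :: v :: b → f v ≤ f u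
  · left
    rw [← isChain_iff_pairwise, isChain_map]
    exact isChain_iff_forall_rel_of_append_cons_cons.2 h
  · right
    push Not at h
    obtain ⟨u, v, a, b, rfl, hlt⟩ := h
    exact ⟨a, u, v, b, rfl, hlt⟩

end List

namespace LieModule

section Monomial

variable {L M ι : Type*} [LieRing L] [AddCommGroup M] [LieRingModule L M]

/-- `lieMonomial [(p₁, X₁), …, (pᵣ, Xᵣ)] Y = [X₁, [X₂, …, [Xᵣ, Y]…]]`; the labels `pᵢ` only
record degrees. -/
def lieMonomial (l : List (ι × L)) (Y : M) : M :=
  l.foldr (fun pX acc => ⁅pX.2, acc⁆) Y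

@[simp]
theorem lieMonomial_cons (pX : ι × L) (l : List (ι × L)) (Y : M) :
    lieMonomial (pX :: l) Y = ⁅pX.2, lieMonomial l Y⁆ := rfl

theorem lieMonomial_append (a b : List (ι × L)) (Y : M) :
    lieMonomial (a ++ b) Y = lieMonomial a (lieMonomial b Y) :=
  List.foldr_append

theorem lieMonomial_add (l : List (ι × L)) (Y Z : M) :
    lieMonomial l (Y + Z) = lieMonomial l Y + lieMonomial l Z := by
  induction l with
  | nil => rfl
  | cons pX l ih => simp [ih]

theorem lieMonomial_append_cons_cons [Add ι] (a b : List (ι × L)) (p q : ι) (x y : L) (Y : M) :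
    lieMonomial (a ++ (p, x) :: (q, y) :: b) Y =
      lieMonomial (a ++ (q, y) :: (p, x) :: b) Y + lieMonomial (a ++ (p + q, ⁅x, y⁆) :: b) Y := by
  rw [lieMonomial_append, lieMonomial_append, lieMonomial_append, ← lieMonomial_add]
  congr 1
  simp only [lieMonomial_cons]
  rw [leibniz_lie, add_comm]

end Monomial

variable {R L M ι : Type*} [CommRing R] [LieRing L] [AddCommGroup M] [Module R M]
  [LieRingModule L M]

theorem lieMonomial_mem_lieSpan (l : List (ι × L)) (Y : M) :
    lieMonomial l Y ∈ LieSubmodule.lieSpan R L {Y} := by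
  induction l with
  | nil => exact LieSubmodule.subset_lieSpan rfl
  | cons pX l ih => exact LieSubmodule.lie_mem _ ih

variable [LieAlgebra R L] (g : ι → Submodule R L) (Y : M)

def homogeneousMonomials : Set M :=
  {m | ∃ l : List (ι × L), (∀ pX ∈ l, pX.2 ∈ g pX.1) ∧ m = lieMonomial l Y}

def decreasingMonomials [LE ι] : Set M :=
  {m | ∃ l : List (ι × L), (∀ pX ∈ l, pX.2 ∈ g pX.1) ∧ (l.map Prod.fst).Pairwise (· ≥ ·) ∧
    m = lieMonomial l Y}

theorem lieMonomial_mem_span_decreasingMonomials [LinearOrder ι] [Add ι]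
    (hgb : ∀ p q : ι, ∀ x ∈ g p, ∀ y ∈ g q, ⁅x, y⁆ ∈ g (p + q))
    (l : List (ι × L)) (hl : ∀ pX ∈ l, pX.2 ∈ g pX.1) :
    lieMonomial l Y ∈ Submodule.span R (decreasingMonomials g Y) := by
  rcases List.pairwise_map_ge_or_exists_lt Prod.fst l with
    hdec | ⟨a, ⟨p, x⟩, ⟨q, y⟩, b, rfl, hpq⟩
  · exact Submodule.subset_span ⟨l, hl, hdec, rfl⟩
  simp only [List.forall_mem_append, List.forall_mem_cons] at hl
  obtain ⟨ha, hx, hy, hb⟩ := hl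
  rw [lieMonomial_append_cons_cons]
  refine add_mem (lieMonomial_mem_span_decreasingMonomials hgb _ ?_)
    (lieMonomial_mem_span_decreasingMonomials hgb _ ?_)
  · simp only [List.forall_mem_append, List.forall_mem_cons]
    exact ⟨ha, hy, hx, hb⟩
  · simp only [List.forall_mem_append, List.forall_mem_cons]
    exact ⟨ha, hgb p q x hx y hy, hb⟩
termination_by (l.length, (l.map Prod.fst).ascendingPairCount)
decreasing_by
  all_goals
    subst_vars
    simp only [List.map_append, List.map_cons, List.length_append, List.length_cons]
  · rw [List.ascendingPairCount_append_cons_cons _ _ hpq]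
    exact Prod.Lex.right _ (Nat.lt_succ_self _)
  · exact Prod.Lex.left _ _ (by omega)

theorem span_homogeneousMonomials_eq_span_decreasingMonomials [LinearOrder ι] [Add ι]
    (hgb : ∀ p q : ι, ∀ x ∈ g p, ∀ y ∈ g q, ⁅x, y⁆ ∈ g (p + q)) :
    Submodule.span R (homogeneousMonomials g Y) = Submodule.span R (decreasingMonomials g Y) := by
  refine le_antisymm (Submodule.span_le.2 ?_) (Submodule.span_mono ?_)
  · rintro _ ⟨l, hl, rfl⟩
    exact lieMonomial_mem_span_decreasingMonomials g Y hgb l hl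
  · exact fun _ ⟨l, hl, _, hm⟩ => ⟨l, hl, hm⟩

variable [LieModule R L M]

theorem lie_mem_span_homogeneousMonomials (hg : ⨆ p, g p = ⊤) (x : L) {m : M}
    (hm : m ∈ Submodule.span R (homogeneousMonomials g Y)) :
    ⁅x, m⁆ ∈ Submodule.span R (homogeneousMonomials g Y) := by
  have hx : x ∈ ⨆ p, g p := hg ▸ Submodule.mem_top
  refine Submodule.iSup_induction g (motive := fun x => ⁅x, m⁆ ∈ _) hx (fun p z hz => ?_)
    (by simp) (fun u v hu hv => by rw [add_lie]; exact add_mem hu hv)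
  induction hm using Submodule.span_induction with
  | mem m hm =>
    obtain ⟨l, hl, rfl⟩ := hm
    refine Submodule.subset_span ⟨(p, z) :: l, ?_, rfl⟩
    rintro pX (_ | ⟨_, hpX⟩)
    exacts [hz, hl pX hpX]
  | zero => simp
  | add u v _ _ hu hv => rw [lie_add]; exact add_mem hu hv
  | smul r u _ hu => rw [lie_smul]; exact Submodule.smul_mem _ _ hu

theorem lieSpan_toSubmodule_eq_span_homogeneousMonomials (hg : ⨆ p, g p = ⊤) :
    (LieSubmodule.lieSpan R L {Y}).toSubmodule = Submodule.span R (homogeneousMonomials g Y) := by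
  refine le_antisymm ?_ (Submodule.span_le.2 ?_)
  · let N : LieSubmodule R L M :=
      { Submodule.span R (homogeneousMonomials g Y) with
        lie_mem := lie_mem_span_homogeneousMonomials g Y hg _ }
    have hYN : {Y} ⊆ (N : Set M) := by
      rintro _ rfl
      exact Submodule.subset_span ⟨[], by simp, rfl⟩
    exact LieSubmodule.lieSpan_le.2 hYN
  · rintro _ ⟨l, -, rfl⟩
    exact lieMonomial_mem_lieSpan l Y

end LieModule

/-- For a ℤ-graded real Lie algebra 𝔰 acting on a module 𝔩 and `Y ∈ 𝔩`,
the 𝔰-submodule generated by `Y` is spanned by the homogeneous decreasing Lie monomials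
`[X₁,[X₂,…,[Xᵣ,Y]…]]` with each `Xᵢ` homogeneous of degree `pᵢ` and `p₁ ≥ p₂ ≥ … ≥ pᵣ`. -/
theorem abelian_ext_lieSpan_eq_span_decreasing_monomials
    {L M : Type*} [LieRing L] [LieAlgebra ℝ L]
    [AddCommGroup M] [Module ℝ M] [LieRingModule L M] [LieModule ℝ L M]
    (g : ℤ → Submodule ℝ L) (hg : DirectSum.IsInternal g)
    (hgb : ∀ p q : ℤ, ∀ x ∈ g p, ∀ y ∈ g q, ⁅x, y⁆ ∈ g (p + q))
    (Y : M) :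
    (LieSubmodule.lieSpan ℝ L {Y}).toSubmodule =
      Submodule.span ℝ { m : M | ∃ l : List (ℤ × L),
        (∀ pX ∈ l, pX.2 ∈ g pX.1) ∧
        (l.map Prod.fst).Pairwise (· ≥ ·) ∧
        m = l.foldr (fun pX acc => ⁅pX.2, acc⁆) Y } :=
  (LieModule.lieSpan_toSubmodule_eq_span_homogeneousMonomials g Y hg.submodule_iSup_eq_top).trans
    (LieModule.span_homogeneousMonomials_eq_span_decreasingMonomials g Y hgb)
end

section
/- Let 𝔰 be a finite dimensional semisimple ℤ-graded real Lie algebra and 𝔩 a finite dimensional irreducible 𝔰-module. If 𝔩 = ⊕ₚ 𝔩ₚ and 𝔩 = ⊕ₚ 𝔩′ₚ are two gradations of 𝔩, then there exists an integer k such that 𝔩′ₚ = 𝔩_{p+k} for all p ∈ ℤ. -/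
/-!
Compare the two gradings through the operators `T n := shiftComponent 𝓜 𝓜' n`, the parts of
`id_M` carrying `𝓜' p` into `𝓜 (p + n)` by the `𝓜`-projection. Both gradings are compatible with
the grading of `L`, so every `T n` is a morphism of Lie modules; by irreducibility a nonzero `T n`
is injective, hence bijective, and then it maps `𝓜' p` onto `𝓜 (p + n)` for all `p`. Two nonzero
operators `T n`, `T k` would make the finite support of `𝓜` invariant under translation by
`k - n`, so at most one `T k` is nonzero. On `𝓜' p` the operator `T (q - p)` is the projection
onto `𝓜 q`, so `𝓜' p ≤ 𝓜 (p + k)`, and equality holds because both families are direct sum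
decompositions.
-/

open DirectSum

lemma DirectSum.mem_of_decompose_eq_zero {ι R M : Type*} [DecidableEq ι] [Semiring R]
    [AddCommGroup M] [Module R M] {𝓜 : ι → Submodule R M} [Decomposition 𝓜] {i : ι} {m : M}
    (hm : ∀ j ≠ i, decompose 𝓜 m j = 0) : m ∈ 𝓜 i := by
  have hsingle : decompose 𝓜 m = of (fun j => 𝓜 j) i (decompose 𝓜 m i) := by
    ext j
    by_cases hj : j = i
    · subst hj; simp
    · rw [hm j hj, of_eq_of_ne _ _ _ hj]
  rw [← (decompose 𝓜).symm_apply_apply m, hsingle, decompose_symm_of]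
  exact (decompose 𝓜 m i).2

lemma Submodule.map_eq_of_iSupIndep {ι R M N : Type*} [Ring R] [AddCommGroup M] [Module R M]
    [AddCommGroup N] [Module R N] {A : ι → Submodule R M} {B : ι → Submodule R N}
    {f : M →ₗ[R] N} (hf : Function.Surjective f) (hA : iSup A = ⊤) (hB : iSupIndep B)
    (hAB : ∀ i, (A i).map f ≤ B i) (i : ι) : (A i).map f = B i := by
  refine congrFun ((hB.le_iff_eq_of_iSup_eq_top ?_).1 hAB) i
  rw [← Submodule.map_iSup, hA, Submodule.map_top, LinearMap.range_eq_top.2 hf]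

lemma LieModuleHom.injective_of_ne_zero {R L M N : Type*} [CommRing R] [LieRing L]
    [AddCommGroup M] [Module R M] [LieRingModule L M] [AddCommGroup N] [Module R N]
    [LieRingModule L N] (hM : ∀ M' : LieSubmodule R L M, M' ≠ ⊥ → M' = ⊤)
    {f : M →ₗ⁅R,L⁆ N} (hf : f ≠ 0) : Function.Injective f := by
  rw [← LieModuleHom.ker_eq_bot]
  by_contra hker
  refine hf (LieModuleHom.ext fun m => ?_)
  exact LieModuleHom.mem_ker.1 (hM _ hker ▸ LieSubmodule.mem_top m)

lemma eq_zero_of_add_mem_iff {ι : Type*} [AddCommGroup ι] [LinearOrder ι] [IsOrderedAddMonoid ι]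
    {S : Set ι} (hS : S.Finite) (hne : S.Nonempty) {d : ι} (hd : ∀ i, i + d ∈ S ↔ i ∈ S) :
    d = 0 := by
  obtain ⟨a, ha, hmax⟩ := Set.exists_max_image S id hS hne
  have hup : a + d ≤ a := hmax _ ((hd a).2 ha)
  have hdown : a - d ≤ a := hmax _ ((hd (a - d)).1 (by rwa [sub_add_cancel]))
  exact le_antisymm (by simpa using hup) (by simpa using hdown)

section ShiftComponent

variable {ι R M : Type*} [DecidableEq ι] [AddCommGroup ι] [Semiring R] [AddCommGroup M]
  [Module R M] (𝓜 𝓜' : ι → Submodule R M) [Decomposition 𝓜] [Decomposition 𝓜']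

def shiftComponent (n : ι) : M →ₗ[R] M :=
  toModule R ι M (fun p => (𝓜 (p + n)).subtype ∘ₗ component R ι (fun i => 𝓜 i) (p + n) ∘ₗ
    (decomposeLinearEquiv 𝓜).toLinearMap ∘ₗ (𝓜' p).subtype) ∘ₗ
    (decomposeLinearEquiv 𝓜').toLinearMap

variable {𝓜 𝓜'}

lemma shiftComponent_apply_of_mem {n p : ι} {m : M} (hm : m ∈ 𝓜' p) :
    shiftComponent 𝓜 𝓜' n m = decompose 𝓜 m (p + n) := by
  simp [shiftComponent, decomposeLinearEquiv_apply, decompose_of_mem 𝓜' hm, ← lof_eq_of R,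
    toModule_lof, ← apply_eq_component]

lemma le_of_forall_ne_shiftComponent_eq_zero {k : ι}
    (hk : ∀ n ≠ k, shiftComponent 𝓜 𝓜' n = 0) (p : ι) : 𝓜' p ≤ 𝓜 (p + k) := by
  intro m hm
  refine mem_of_decompose_eq_zero fun j hj => Subtype.ext ?_
  have hshift := shiftComponent_apply_of_mem (𝓜 := 𝓜) (n := j - p) hm
  rw [hk (j - p) (fun h => hj (by rw [← h]; abel)), add_sub_cancel] at hshift
  exact hshift.symm

end ShiftComponent

section LieAction

variable {ι R L M : Type*} [DecidableEq ι] [AddCommGroup ι] [CommRing R] [LieRing L]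
  [Module R L] [AddCommGroup M] [Module R M] [LieRingModule L M]

def IsGradedLieAction (𝓛 : ι → Submodule R L) (𝓜 : ι → Submodule R M) : Prop :=
  ∀ r p, ∀ x ∈ 𝓛 r, ∀ m ∈ 𝓜 p, ⁅x, m⁆ ∈ 𝓜 (r + p)

variable {𝓛 : ι → Submodule R L} {𝓜 𝓜' : ι → Submodule R M} [Decomposition 𝓜] [Decomposition 𝓜']

lemma decompose_lie_of_mem (h𝓜 : IsGradedLieAction 𝓛 𝓜)
    {r : ι} {x : L} (hx : x ∈ 𝓛 r) (m : M) (q : ι) :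
    (decompose 𝓜 ⁅x, m⁆ (r + q) : M) = ⁅x, (decompose 𝓜 m q : M)⁆ := by
  induction m using Decomposition.inductionOn 𝓜 with
  | zero => simp
  | @homogeneous p m =>
    have hxm := h𝓜 r p x hx m m.2
    by_cases hpq : p = q
    · subst hpq
      simp [decompose_of_mem_same 𝓜 hxm]
    · rw [decompose_of_mem_ne 𝓜 hxm (by simpa using hpq), decompose_coe,
        of_eq_of_ne _ _ _ (Ne.symm hpq)]
      simp
  | add m m' hm hm' => simp [lie_add, hm, hm']

lemma shiftComponent_lie (h𝓛 : iSup 𝓛 = ⊤) (h𝓜 : IsGradedLieAction 𝓛 𝓜)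
    (h𝓜' : IsGradedLieAction 𝓛 𝓜') (n : ι) (x : L) (m : M) :
    shiftComponent 𝓜 𝓜' n ⁅x, m⁆ = ⁅x, shiftComponent 𝓜 𝓜' n m⁆ := by
  have hx : x ∈ ⨆ r, 𝓛 r := h𝓛 ▸ Submodule.mem_top
  refine Submodule.iSup_induction 𝓛 (motive := fun x => ∀ m, shiftComponent 𝓜 𝓜' n ⁅x, m⁆ =
    ⁅x, shiftComponent 𝓜 𝓜' n m⁆) hx (fun r x hx m => ?_) (by simp) (fun x y hx hy m => ?_) m
  · induction m using Decomposition.inductionOn 𝓜' with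
    | zero => simp
    | @homogeneous p m =>
      rw [shiftComponent_apply_of_mem (h𝓜' r p x hx m m.2), shiftComponent_apply_of_mem m.2,
        add_assoc, decompose_lie_of_mem h𝓜 hx]
    | add m m' hm hm' => simp [lie_add, hm, hm']
  · simp [add_lie, hx, hy]

variable (𝓜 𝓜') in
def shiftComponentLieHom (h𝓛 : iSup 𝓛 = ⊤) (h𝓜 : IsGradedLieAction 𝓛 𝓜)
    (h𝓜' : IsGradedLieAction 𝓛 𝓜') (n : ι) : M →ₗ⁅R,L⁆ M :=
  { shiftComponent 𝓜 𝓜' n with map_lie' := shiftComponent_lie h𝓛 h𝓜 h𝓜' n _ _ }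

lemma shiftComponent_injective (hirr : ∀ N : LieSubmodule R L M, N ≠ ⊥ → N = ⊤)
    (h𝓛 : iSup 𝓛 = ⊤) (h𝓜 : IsGradedLieAction 𝓛 𝓜) (h𝓜' : IsGradedLieAction 𝓛 𝓜') {n : ι}
    (hn : shiftComponent 𝓜 𝓜' n ≠ 0) : Function.Injective (shiftComponent 𝓜 𝓜' n) :=
  LieModuleHom.injective_of_ne_zero hirr (f := shiftComponentLieHom 𝓜 𝓜' h𝓛 h𝓜 h𝓜' n)
    fun h => hn (LinearMap.ext fun m => LieModuleHom.congr_fun h m)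

end LieAction

section Irreducible

variable {ι K L M : Type*} [DecidableEq ι] [AddCommGroup ι] [Field K] [LieRing L]
  [Module K L] [AddCommGroup M] [Module K M] [LieRingModule L M] [FiniteDimensional K M]
  {𝓛 : ι → Submodule K L} {𝓜 𝓜' : ι → Submodule K M} [Decomposition 𝓜] [Decomposition 𝓜']

lemma map_shiftComponent_eq (hirr : ∀ N : LieSubmodule K L M, N ≠ ⊥ → N = ⊤)
    (h𝓛 : iSup 𝓛 = ⊤) (h𝓜 : IsGradedLieAction 𝓛 𝓜) (h𝓜' : IsGradedLieAction 𝓛 𝓜') {n : ι}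
    (hn : shiftComponent 𝓜 𝓜' n ≠ 0) (p : ι) :
    (𝓜' p).map (shiftComponent 𝓜 𝓜' n) = 𝓜 (p + n) := by
  have hinj := shiftComponent_injective hirr h𝓛 h𝓜 h𝓜' hn
  refine Submodule.map_eq_of_iSupIndep (LinearMap.injective_iff_surjective.1 hinj)
    (Decomposition.isInternal 𝓜').submodule_iSup_eq_top
    ((Decomposition.isInternal 𝓜).submodule_iSupIndep.comp (add_left_injective n))
    (fun p => Submodule.map_le_iff_le_comap.2 fun m hm => ?_) p
  rw [Submodule.mem_comap, shiftComponent_apply_of_mem hm]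
  exact (decompose 𝓜 m (p + n)).2

lemma eq_of_shiftComponent_ne_zero [LinearOrder ι] [IsOrderedAddMonoid ι]
    (hirr : ∀ N : LieSubmodule K L M, N ≠ ⊥ → N = ⊤)
    (h𝓛 : iSup 𝓛 = ⊤) (h𝓜 : IsGradedLieAction 𝓛 𝓜) (h𝓜' : IsGradedLieAction 𝓛 𝓜') {n k : ι}
    (hn : shiftComponent 𝓜 𝓜' n ≠ 0) (hk : shiftComponent 𝓜 𝓜' k ≠ 0) : n = k := by
  have hbot : ∀ {j : ι}, shiftComponent 𝓜 𝓜' j ≠ 0 → ∀ p, 𝓜' p = ⊥ ↔ 𝓜 (p + j) = ⊥ :=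
    fun {j} hj p => by
      rw [← map_shiftComponent_eq hirr h𝓛 h𝓜 h𝓜' hj, (Submodule.map_injective_of_injective
        (shiftComponent_injective hirr h𝓛 h𝓜 h𝓜' hj)).eq_iff' (Submodule.map_bot _)]
  have hne : {q | 𝓜 q ≠ ⊥}.Nonempty := by
    by_contra! hall
    have htop : (⊤ : Submodule K M) = ⊥ := by
      rw [← (Decomposition.isInternal 𝓜).submodule_iSup_eq_top, iSup_eq_bot]
      simpa [Set.eq_empty_iff_forall_notMem] using hall
    exact hn (LinearMap.ext fun m => by
      rw [(Submodule.eq_bot_iff _).1 htop m Submodule.mem_top, map_zero, LinearMap.zero_apply])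
  have hshift : ∀ q, q + (k - n) ∈ {q | 𝓜 q ≠ ⊥} ↔ q ∈ {q | 𝓜 q ≠ ⊥} := fun q => by
    rw [show q + (k - n) = q - n + k by abel]
    conv_rhs => rw [← sub_add_cancel q n]
    exact (not_congr (hbot hk (q - n))).symm.trans (not_congr (hbot hn (q - n)))
  exact (sub_eq_zero.1 (eq_zero_of_add_mem_iff (WellFoundedGT.finite_ne_bot_of_iSupIndep
    (Decomposition.isInternal 𝓜).submodule_iSupIndep) hne hshift)).symm

lemma exists_forall_ne_shiftComponent_eq_zero [LinearOrder ι] [IsOrderedAddMonoid ι]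
    (hirr : ∀ N : LieSubmodule K L M, N ≠ ⊥ → N = ⊤)
    (h𝓛 : iSup 𝓛 = ⊤) (h𝓜 : IsGradedLieAction 𝓛 𝓜) (h𝓜' : IsGradedLieAction 𝓛 𝓜') :
    ∃ k, ∀ n ≠ k, shiftComponent 𝓜 𝓜' n = 0 := by
  by_cases h : ∃ k, shiftComponent 𝓜 𝓜' k ≠ 0
  · obtain ⟨k, hk⟩ := h
    exact ⟨k, fun n hnk => by_contra fun hn =>
      hnk (eq_of_shiftComponent_ne_zero hirr h𝓛 h𝓜 h𝓜' hn hk)⟩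
  · push Not at h
    exact ⟨0, fun n _ => h n⟩

end Irreducible

theorem gradations_of_irreducible_module_differ_by_shift_general
    {L M : Type*} [LieRing L] [LieAlgebra ℝ L]
    [AddCommGroup M] [Module ℝ M] [LieRingModule L M]
    [FiniteDimensional ℝ M]
    (g : ℤ → Submodule ℝ L) (hg : DirectSum.IsInternal g)
    (hirr : ∀ N : LieSubmodule ℝ L M, N ≠ ⊥ → N = ⊤)
    (h h' : ℤ → Submodule ℝ M)
    (hh : DirectSum.IsInternal h)
    (hhb : ∀ p q : ℤ, ∀ x ∈ g p, ∀ m ∈ h q, ⁅x, m⁆ ∈ h (p + q))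
    (hh' : DirectSum.IsInternal h')
    (hhb' : ∀ p q : ℤ, ∀ x ∈ g p, ∀ m ∈ h' q, ⁅x, m⁆ ∈ h' (p + q)) :
    ∃ k : ℤ, ∀ p : ℤ, h' p = h (p + k) := by
  let := hh.chooseDecomposition
  let := hh'.chooseDecomposition
  obtain ⟨k, hk⟩ :=
    exists_forall_ne_shiftComponent_eq_zero hirr hg.submodule_iSup_eq_top hhb hhb'
  refine ⟨k, congrFun ?_⟩
  exact ((hh.submodule_iSupIndep.comp (add_left_injective k)).le_iff_eq_of_iSup_eq_top
    hh'.submodule_iSup_eq_top).1 (le_of_forall_ne_shiftComponent_eq_zero hk)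

/-- two gradations of a finite dimensional irreducible module over a finite
dimensional semisimple ℤ-graded real Lie algebra differ by a shift: there is `k ∈ ℤ`
with `𝔩′ₚ = 𝔩_{p+k}` for all `p`. -/
theorem gradations_of_irreducible_module_differ_by_shift
    {L M : Type*} [LieRing L] [LieAlgebra ℝ L] [FiniteDimensional ℝ L]
    [LieAlgebra.IsSemisimple ℝ L]
    [AddCommGroup M] [Module ℝ M] [LieRingModule L M] [LieModule ℝ L M]
    [FiniteDimensional ℝ M]
    (g : ℤ → Submodule ℝ L) (hg : DirectSum.IsInternal g)
    (hgb : ∀ p q : ℤ, ∀ x ∈ g p, ∀ y ∈ g q, ⁅x, y⁆ ∈ g (p + q))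
    (hirr : ∀ N : LieSubmodule ℝ L M, N ≠ ⊥ → N = ⊤) (hM : (⊤ : Submodule ℝ M) ≠ ⊥)
    (h h' : ℤ → Submodule ℝ M)
    (hh : DirectSum.IsInternal h)
    (hhb : ∀ p q : ℤ, ∀ x ∈ g p, ∀ m ∈ h q, ⁅x, m⁆ ∈ h (p + q))
    (hh' : DirectSum.IsInternal h')
    (hhb' : ∀ p q : ℤ, ∀ x ∈ g p, ∀ m ∈ h' q, ⁅x, m⁆ ∈ h' (p + q)) :
    ∃ k : ℤ, ∀ p : ℤ, h' p = h (p + k) :=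
  gradations_of_irreducible_module_differ_by_shift_general g hg hirr h h' hh hhb hh' hhb'
end
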